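/- arXiv:2509.26212 — 4 statements merged into one kernel-verified Lean document; each statement's English description precedes it below -/
import Mathlib

section
/- Every finitely generated nilpotent group G is virtually abelian if and only if its center Z(G) has finite index in G. -/
/-!
Replace the abelian subgroup of finite index by its normal core `K`, of index `m`. The last
nontrivial term `A = ⁅γₙ, G⁆` of the lower central series is central, so `⁅b, g⁆` is
bimultiplicative in `b ∈ γₙ` and `g ∈ G`, and `⁅b, g⁆ ^ (m * m) = ⁅b ^ m, g ^ m⁆ = 1` because
`b ^ m, g ^ m ∈ K`. Hence `A` is torsion; its intersection with the finitely generated abelian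
group `K` is then finite, and so is `A`. Induction on the nilpotency class, passing to `G ⧸ A`,
shows that `⁅G, G⁆` is finite, and a finitely generated group with finitely many commutators has
center of finite index.
-/

universe u

open Subgroup
open scoped commutatorElement

theorem CommGroup.fg_subgroup {G : Type*} [CommGroup G] [Group.FG G] (H : Subgroup G) :
    Group.FG H := by
  have : Module.Finite ℤ (Additive G) := Module.Finite.iff_addGroup_fg.mpr inferInstance
  rw [Group.fg_iff_subgroup_fg, fg_iff_add_fg, ← AddSubgroup.toIntSubmodule_toAddSubgroup
    H.toAddSubgroup, ← Submodule.fg_iff_addSubgroup_fg]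
  exact IsNoetherian.noetherian _

theorem CommGroup.finite_torsion (G : Type*) [CommGroup G] [Group.FG G] :
    Finite (torsion G) :=
  have := fg_subgroup (torsion G)
  finite_of_fg_isMulTorsion _ fun x ↦ Submonoid.isOfFinOrder_coe.mp x.2

section

variable {G : Type*} [Group G]

theorem commutatorElement_pow_right {a b : G} (h : ⁅a, b⁆ ∈ center G) (k : ℕ) :
    ⁅a, b ^ k⁆ = ⁅a, b⁆ ^ k := by
  induction k with
  | zero => simp
  | succ k ih =>
    rw [pow_succ, commutatorElement_mul_right_eq_mul_conj, ih, mul_assoc _ (b ^ k),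
      mem_center_iff.mp h (b ^ k)]
    simp [pow_succ, mul_assoc]

theorem commutatorElement_pow_left {a b : G} (h : ⁅a, b⁆ ∈ center G) (j : ℕ) :
    ⁅a ^ j, b⁆ = ⁅a, b⁆ ^ j := by
  induction j with
  | zero => simp
  | succ j ih =>
    rw [pow_succ', commutatorElement_mul_left_eq_conj_mul, ih,
      mem_center_iff.mp (pow_mem h j) a]
    simp [pow_succ]

theorem commutatorElement_pow_pow {a b : G} (h : ⁅a, b⁆ ∈ center G) (j k : ℕ) :
    ⁅a ^ j, b ^ k⁆ = ⁅a, b⁆ ^ (j * k) := by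
  have hk : ⁅a, b ^ k⁆ ∈ center G := commutatorElement_pow_right h k ▸ pow_mem h k
  rw [commutatorElement_pow_left hk, commutatorElement_pow_right h, ← pow_mul, mul_comm]

theorem Subgroup.isMulTorsion_closure_of_le_center {s : Set G} (hs : ∀ x ∈ s, IsOfFinOrder x)
    (hc : closure s ≤ center G) : IsMulTorsion (closure s) := by
  rintro ⟨x, hx⟩
  refine Submonoid.isOfFinOrder_coe.mp ?_
  induction hx using closure_induction with
  | mem x hx => exact hs x hx
  | one => exact IsOfFinOrder.one
  | mul x y hx hy ihx ihy => exact Commute.isOfFinOrder_mul (mem_center_iff.mp (hc hy) x) ihx ihy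
  | inv x _ ih => exact ih.inv

theorem Subgroup.finite_of_finite_map_of_finite_ker {G' : Type*} [Group G'] {H : Subgroup G}
    (f : G →* G') [Finite f.ker] [Finite (H.map f)] : Finite H := by
  rw [(f.domRestrict H).finite_iff_finite_ker_range, MonoidHom.ker_domRestrict,
    MonoidHom.domRestrict_range]
  refine ⟨Finite.of_injective (fun x ↦ (⟨x.1, x.2⟩ : f.ker)) ?_, ‹_›⟩
  exact fun x y h ↦ Subtype.ext <| Subtype.ext <| congrArg (fun z : f.ker ↦ (z : G)) h

open scoped IsMulCommutative in
theorem Subgroup.finite_of_isMulTorsion [Group.FG G] (K : Subgroup G) [K.FiniteIndex]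
    [IsMulCommutative K] {T : Subgroup G} (hT : IsMulTorsion T) : Finite T := by
  have := CommGroup.finite_torsion K
  rw [finite_iff_finite_and_finiteIndex (K.subgroupOf T)]
  refine ⟨Finite.of_injective (fun x ↦ (⟨⟨x.1, x.2⟩, ?_⟩ : CommGroup.torsion K)) ?_, inferInstance⟩
  · exact Submonoid.isOfFinOrder_coe.mp
      (Submonoid.isOfFinOrder_coe.mpr (hT x.1) : IsOfFinOrder (x : G))
  · exact fun x y h ↦ Subtype.ext <| Subtype.ext <|
      congrArg (fun z : CommGroup.torsion K ↦ (z : G)) h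

theorem isOfFinOrder_commutatorElement_of_mem_center (K : Subgroup G) [K.Normal] [K.FiniteIndex]
    [IsMulCommutative K] {a b : G} (h : ⁅a, b⁆ ∈ center G) : IsOfFinOrder ⁅a, b⁆ := by
  have hm : K.index ≠ 0 := FiniteIndex.index_ne_zero
  refine isOfFinOrder_iff_pow_eq_one.mpr ⟨K.index * K.index, by positivity, ?_⟩
  rw [← commutatorElement_pow_pow h, commutatorElement_eq_one_iff_mul_comm]
  exact setLike_mul_comm (pow_index_mem K a) (pow_index_mem K b)

theorem isMulTorsion_commutator_of_le_center (K : Subgroup G) [K.Normal] [K.FiniteIndex]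
    [IsMulCommutative K] {H₁ H₂ : Subgroup G} (hc : ⁅H₁, H₂⁆ ≤ center G) :
    IsMulTorsion (⁅H₁, H₂⁆ : Subgroup G) := by
  rw [Subgroup.commutator_def] at hc ⊢
  refine isMulTorsion_closure_of_le_center (fun x hx ↦ ?_) hc
  obtain ⟨b, -, g, -, rfl⟩ := id hx
  exact isOfFinOrder_commutatorElement_of_mem_center K (hc (subset_closure hx))

end

theorem finite_commutator_of_lowerCentralSeries_eq_bot (n : ℕ) :
    ∀ (G : Type u) [Group G] [Group.FG G] (K : Subgroup G) [K.Normal] [K.FiniteIndex]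
      [IsMulCommutative K], (⊤ : Subgroup G).lowerCentralSeries (n + 1) = ⊥ →
      Finite (commutator G) := by
  induction n with
  | zero =>
    intro G _ _ K _ _ _ h
    rw [show commutator G = ⊥ from h]
    infer_instance
  | succ n ih =>
    intro G _ _ K _ _ _ h
    set A := (⊤ : Subgroup G).lowerCentralSeries (n + 1)
    have hA : A ≤ center G := commutator_top_right_eq_bot_iff_le_center.mp h
    have : Finite A := K.finite_of_isMulTorsion (isMulTorsion_commutator_of_le_center K hA)
    set π := QuotientGroup.mk' A
    have hπ : Function.Surjective π := QuotientGroup.mk'_surjective A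
    have : (K.map π).Normal := ‹K.Normal›.map π hπ
    have : (K.map π).FiniteIndex :=
      ⟨ne_zero_of_dvd_ne_zero FiniteIndex.index_ne_zero (index_map_dvd K hπ)⟩
    have hQ : (⊤ : Subgroup (G ⧸ A)).lowerCentralSeries (n + 1) = ⊥ := by
      rw [← map_top_of_surjective π hπ, ← map_lowerCentralSeries, Subgroup.map_eq_bot_iff,
        QuotientGroup.ker_mk']
    have : Finite (commutator (G ⧸ A)) := ih (G ⧸ A) (K.map π) hQ
    have : Finite π.ker := by rwa [QuotientGroup.ker_mk']
    have : Finite ((commutator G).map π) := by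
      rwa [commutator_def, map_commutator, map_top_of_surjective π hπ]
    exact finite_of_finite_map_of_finite_ker π

/-- A finitely generated nilpotent group is virtually abelian iff its center has finite index. -/
theorem stmt3 (G : Type*) [Group G] [Group.FG G] [Group.IsNilpotent G] :
    (∃ H : Subgroup G, H.FiniteIndex ∧ ∀ a ∈ H, ∀ b ∈ H, a * b = b * a) ↔
      (Subgroup.center G).FiniteIndex := by
  refine ⟨fun ⟨H, _, hH⟩ ↦ ?_, fun h ↦ ⟨center G, h, fun a _ b hb ↦ mem_center_iff.mp hb a⟩⟩
  have : IsMulCommutative H.normalCore := .of_setLike_mul_comm fun a ha b hb ↦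
    hH a (normalCore_le H ha) b (normalCore_le H hb)
  obtain ⟨n, hn⟩ := Subgroup.nilpotent_iff_lowerCentralSeries.mp ‹Group.IsNilpotent G›
  have : Finite (commutator G) := finite_commutator_of_lowerCentralSeries_eq_bot n G H.normalCore
    (Subgroup.lowerCentralSeries_succ_eq_bot _ (hn ▸ bot_le))
  have : Finite (commutatorSet G) := Set.Finite.subset (Set.toFinite (commutator G : Set G))
    (commutator_eq_closure G ▸ subset_closure)
  exact finiteIndex_center
end

section
/- Let p be a prime, k = 𝔽_p, and V = k². Let the additive group k act on the abelian group A = ⊕_{n ∈ ℕ} V, where x ∈ k acts on each summand by the matrix [[1, x],[0, 1]]. Then the semidirect product G = A ⋊ k is two-step nilpotent and virtually abelian, but its center has infinite index in G. -/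
/-!
Both the projection `rightHom` onto the acting group and the projection `sndHom` onto the
second coordinates are homomorphisms to abelian groups, so they kill all commutators; an element
killed by both is a translation by vectors fixed by every shear, hence central. The kernel of
`rightHom` is the abelian group `A`, of index `|R|`. Conversely, a central element commutes with
the shear by `1`, which forces its second coordinates to vanish, so the center lies in the kernel
of `sndHom`, whose quotient `ι →₀ R` is infinite.
-/

open Multiplicative SemidirectProduct

theorem SemidirectProduct.commute_of_right_eq_one {N G : Type*} [CommGroup N] [Group G]
    {φ : G →* MulAut N} {a b : N ⋊[φ] G} (ha : a.right = 1) (hb : b.right = 1) :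
    Commute a b := by
  ext
  · simp [ha, hb, mul_comm]
  · simp [ha, hb]

variable {ι R : Type*} [Ring R]

def shear (x : R) : R × R ≃+ R × R where
  toFun v := (v.1 + x * v.2, v.2)
  invFun v := (v.1 - x * v.2, v.2)
  left_inv v := by simp
  right_inv v := by simp
  map_add' v w := by simp only [Prod.fst_add, Prod.snd_add, Prod.mk_add_mk]; noncomm_ring

theorem shear_add (x y : R) (v : R × R) : shear (x + y) v = shear x (shear y v) := by
  simp only [shear, AddEquiv.coe_mk, Equiv.coe_fn_mk, Prod.mk.injEq, and_true]
  noncomm_ring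

noncomputable def shearAction : Multiplicative R →* MulAut (Multiplicative (ι →₀ R × R)) where
  toFun x := AddEquiv.toMultiplicative (Finsupp.mapRange.addEquiv (shear x.toAdd))
  map_one' := by
    ext a n : 3
    simp [shear]
  map_mul' x y := by
    ext a n : 3
    exact shear_add _ _ _

theorem toAdd_shearAction_apply (x : Multiplicative R) (a : Multiplicative (ι →₀ R × R)) (n : ι) :
    toAdd (shearAction x a) n = shear (toAdd x) (toAdd a n) := rfl

abbrev ShearGroup (ι R : Type*) [Ring R] :=
  Multiplicative (ι →₀ R × R) ⋊[shearAction] Multiplicative R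

namespace ShearGroup

noncomputable def sndHom : ShearGroup ι R →* Multiplicative (ι →₀ R) where
  toFun g := ofAdd ((toAdd g.left).mapRange Prod.snd rfl)
  map_one' := by simp
  map_mul' g h := by
    ext n
    simp [toAdd_shearAction_apply, shear]

theorem sndHom_surjective : Function.Surjective (sndHom : ShearGroup ι R →* _) := by
  intro f
  refine ⟨inl (ofAdd ((toAdd f).mapRange (fun b => ((0 : R), b)) rfl)), ?_⟩
  ext n
  simp [sndHom]

theorem ker_rightHom_inf_ker_sndHom_le_center :
    (rightHom : ShearGroup ι R →* _).ker ⊓ sndHom.ker ≤ Subgroup.center (ShearGroup ι R) := by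
  intro z hz
  obtain ⟨hr, hs⟩ := Subgroup.mem_inf.1 hz
  rw [MonoidHom.mem_ker, rightHom_eq_right] at hr
  have hb : ∀ n, (toAdd z.left n).2 = 0 := fun n => by
    simpa [sndHom] using congr(toAdd $hs n)
  have hfix : ∀ x, shearAction x z.left = z.left := fun x => by
    ext n : 2
    rw [toAdd_shearAction_apply]
    simp [shear, hb, Prod.ext_iff]
  refine Subgroup.mem_center_iff.2 fun w => ?_
  ext : 1
  · simp [hfix, hr, mul_comm]
  · simp [hr, mul_comm]

theorem commutator_le_center : commutator (ShearGroup ι R) ≤ Subgroup.center (ShearGroup ι R) :=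
  (le_inf (Abelianization.commutator_subset_ker _) (Abelianization.commutator_subset_ker _)).trans
    ker_rightHom_inf_ker_sndHom_le_center

theorem center_le_ker_sndHom : Subgroup.center (ShearGroup ι R) ≤ sndHom.ker := by
  intro z hz
  have h := congr_arg SemidirectProduct.left
    (Subgroup.mem_center_iff.1 hz (inr (ofAdd (1 : R))))
  ext n
  simpa [toAdd_shearAction_apply, shear, sndHom, Prod.ext_iff] using congr(toAdd $h n)

theorem not_finiteIndex_center [Nontrivial R] [Infinite ι] :
    ¬ (Subgroup.center (ShearGroup ι R)).FiniteIndex := by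
  intro _
  have : (sndHom : ShearGroup ι R →* _).ker.FiniteIndex :=
    Subgroup.finiteIndex_of_le center_le_ker_sndHom
  apply this.index_ne_zero
  rw [Subgroup.index_ker, MonoidHom.range_eq_top.2 sndHom_surjective, Subgroup.card_top]
  exact Nat.card_eq_zero_of_infinite

end ShearGroup

/-- Let `p` be a prime, `k = 𝔽_p`, `V = k²`, and let `k` act on `A = ⊕_{n ∈ ℕ} V` where
`x` acts coordinatewise by `(a, b) ↦ (a + x b, b)`.  The semidirect product `A ⋊ k` is
two-step nilpotent and virtually abelian, but its center has infinite index. -/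
theorem stmt4 (p : ℕ) [Fact p.Prime] :
    ∃ φ : Multiplicative (ZMod p) →*
        MulAut (Multiplicative (ℕ →₀ (ZMod p × ZMod p))),
      (∀ (x : Multiplicative (ZMod p))
          (a : Multiplicative (ℕ →₀ (ZMod p × ZMod p))) (n : ℕ),
        Multiplicative.toAdd (φ x a) n =
          ((Multiplicative.toAdd a n).1 +
              Multiplicative.toAdd x * (Multiplicative.toAdd a n).2,
            (Multiplicative.toAdd a n).2)) ∧
      (commutator (Multiplicative (ℕ →₀ (ZMod p × ZMod p)) ⋊[φ] Multiplicative (ZMod p)) ≤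
        Subgroup.center
          (Multiplicative (ℕ →₀ (ZMod p × ZMod p)) ⋊[φ] Multiplicative (ZMod p))) ∧
      (∃ H : Subgroup
          (Multiplicative (ℕ →₀ (ZMod p × ZMod p)) ⋊[φ] Multiplicative (ZMod p)),
        H.FiniteIndex ∧ ∀ a ∈ H, ∀ b ∈ H, a * b = b * a) ∧
      ¬ (Subgroup.center
          (Multiplicative (ℕ →₀ (ZMod p × ZMod p)) ⋊[φ] Multiplicative (ZMod p))).FiniteIndex :=
  ⟨shearAction, fun _ _ _ => rfl, ShearGroup.commutator_le_center,
    ⟨rightHom.ker, inferInstance, fun _ ha _ hb => commute_of_right_eq_one ha hb⟩,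
    ShearGroup.not_finiteIndex_center⟩
end

section
/- Let G be a group, and for each n ∈ ℕ let Gₙ ≤ G be a non-abelian two-step nilpotent subgroup, such that [G_m, G_n] = {e} for all m ≠ n. Let Aₙ = [Gₙ,Gₙ] and suppose the subgroup generated by ⋃ₙ Aₙ is the internal direct sum of the Aₙ. Then G is not virtually abelian. -/
/-!
If `K` has finite index, pigeonhole gives `m ≠ n` with `aₘ⁻¹ aₙ, bₘ⁻¹ bₙ ∈ K` for the
non-commuting pairs `aₖ, bₖ ∈ Hₖ`. As `Hₘ` and `Hₙ` commute, the commutator of these two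
elements of `K` splits as `⁅aₘ⁻¹, bₘ⁻¹⁆ ⁅aₙ, bₙ⁆`; it is trivial because `K` is abelian, so
`⁅aₘ⁻¹, bₘ⁻¹⁆` lies in both `[Hₘ, Hₘ]` and `[Hₙ, Hₙ]`, which intersect trivially. Hence `aₘ`
and `bₘ` commute, a contradiction.
-/

open scoped commutatorElement

theorem commutatorElement_mul_mul_of_commute {G : Type*} [Group G] {a a' b b' : G}
    (h₁ : Commute a b) (h₂ : Commute a b') (h₃ : Commute a' b) (h₄ : Commute a' b') :
    ⁅a * b, a' * b'⁆ = ⁅a, a'⁆ * ⁅b, b'⁆ := by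
  simp only [commutatorElement_def, mul_inv_rev, mul_assoc, h₄.inv_inv.symm.eq,
    h₃.symm.left_comm, h₁.inv_left.symm.left_comm, h₂.inv_left.symm.left_comm,
    h₃.inv_left.symm.left_comm, h₄.inv_left.symm.left_comm, h₁.inv_inv.symm.left_comm,
    h₃.inv_inv.symm.left_comm]

theorem Commute.of_mul_of_disjoint_commutator {G : Type*} [Group G] {A B : Subgroup G}
    (hAB : ∀ x ∈ A, ∀ y ∈ B, Commute x y) (hdisj : Disjoint ⁅A, A⁆ ⁅B, B⁆)
    {a a' b b' : G} (ha : a ∈ A) (ha' : a' ∈ A) (hb : b ∈ B) (hb' : b' ∈ B)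
    (h : Commute (a * b) (a' * b')) : Commute a a' := by
  have hsplit : ⁅a, a'⁆ * ⁅b, b'⁆ = 1 := by
    rw [← commutatorElement_mul_mul_of_commute (hAB a ha b hb) (hAB a ha b' hb')
      (hAB a' ha' b hb) (hAB a' ha' b' hb')]
    exact commutatorElement_eq_one_iff_commute.mpr h
  have hmemB : ⁅a, a'⁆ ∈ ⁅B, B⁆ := by
    rw [eq_inv_of_mul_eq_one_left hsplit]
    exact inv_mem (Subgroup.commutator_mem_commutator hb hb')
  exact commutatorElement_eq_one_iff_commute.mp <|
    Subgroup.disjoint_def.mp hdisj (Subgroup.commutator_mem_commutator ha ha') hmemB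

theorem Subgroup.exists_ne_inv_mul_mem_of_finiteIndex {G ι : Type*} [Group G] [Infinite ι]
    (K : Subgroup G) [K.FiniteIndex] (f g : ι → G) :
    ∃ i j, i ≠ j ∧ (f i)⁻¹ * f j ∈ K ∧ (g i)⁻¹ * g j ∈ K := by
  have : Finite (G ⧸ K) := K.finite_quotient_of_finiteIndex
  obtain ⟨i, j, hij, hfg⟩ :=
    Finite.exists_ne_map_eq_of_infinite fun k => ((f k : G ⧸ K), (g k : G ⧸ K))
  exact ⟨i, j, hij, QuotientGroup.eq.mp (congrArg Prod.fst hfg),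
    QuotientGroup.eq.mp (congrArg Prod.snd hfg)⟩

theorem stmt5_general (G : Type*) [Group G] (H : ℕ → Subgroup G)
    (hna : ∀ n : ℕ, ∃ a ∈ H n, ∃ b ∈ H n, a * b ≠ b * a)
    (hcomm : ∀ m n : ℕ, m ≠ n → ∀ a ∈ H m, ∀ b ∈ H n, a * b = b * a)
    (hind : ∀ n : ℕ,
      ⁅H n, H n⁆ ⊓ (⨆ m ∈ {m : ℕ | m ≠ n}, ⁅H m, H m⁆) = ⊥) :
    ¬ ∃ K : Subgroup G, K.FiniteIndex ∧ ∀ a ∈ K, ∀ b ∈ K, a * b = b * a := by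
  rintro ⟨K, hK, hKab⟩
  choose a ha b hb hab using hna
  obtain ⟨m, n, hmn, haK, hbK⟩ := K.exists_ne_inv_mul_mem_of_finiteIndex a b
  have hindep : iSupIndep fun n => ⁅H n, H n⁆ := fun n => disjoint_iff.mpr (hind n)
  have hinv : Commute (a m)⁻¹ (b m)⁻¹ :=
    Commute.of_mul_of_disjoint_commutator (hcomm m n hmn) (hindep.pairwiseDisjoint hmn)
      (inv_mem (ha m)) (inv_mem (hb m)) (ha n) (hb n) (hKab _ haK _ hbK)
  exact hab m (Commute.inv_inv_iff.mp hinv).eq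

/-- If a group `G` contains, for each `n ∈ ℕ`, a non-abelian two-step nilpotent subgroup
`H n`, such that the `H n` pairwise commute and the subgroup generated by the commutator
subgroups `A n = [H n, H n]` is their internal direct sum, then `G` is not virtually
abelian. -/
theorem stmt5 (G : Type*) [Group G] (H : ℕ → Subgroup G)
    (hna : ∀ n : ℕ, ∃ a ∈ H n, ∃ b ∈ H n, a * b ≠ b * a)
    (h2step : ∀ n : ℕ, ∀ a ∈ H n, ∀ b ∈ H n, ∀ c ∈ H n, ⁅⁅a, b⁆, c⁆ = 1)
    (hcomm : ∀ m n : ℕ, m ≠ n → ∀ a ∈ H m, ∀ b ∈ H n, a * b = b * a)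
    (hind : ∀ n : ℕ,
      ⁅H n, H n⁆ ⊓ (⨆ m ∈ {m : ℕ | m ≠ n}, ⁅H m, H m⁆) = ⊥) :
    ¬ ∃ K : Subgroup G, K.FiniteIndex ∧ ∀ a ∈ K, ∀ b ∈ K, a * b = b * a :=
  stmt5_general G H hna hcomm hind
end

section
/- Let p be a prime, A = 𝔽_p((t)), and s : ℕ_{>0} → {0,1}. Define the group G = A ×_{η_s} A on the set A × A with multiplication (x,a)(y,b) = (x+y, a+b+η_s(x,y)). Then the commutator in G satisfies [(x,a),(y,b)] = (0, η_s(x,y) − η_s(y,x)), and in particular [(tᵃ,0),(tᵇ,0)] = (0, s((b−a)/2) t^{(a+b)/2}) when a < b and a ≡ b mod 2, and equals the identity when a = b or a ≢ b mod 2. -/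
/-!
The cocycle `η_s` is additive in its second argument, so `(-x, -a + η(x,x))` inverts `(x,a)`, and
expanding the commutator leaves exactly `η(x,y) - η(y,x)`. On monomials, `η(tᵃ, tᵇ)` only sees the
index `k = (b - a)/2`: it is `s(k) t^{(a+b)/2}` when `a < b` have the same parity and `0` otherwise.
Hence for `a < b` the term `η(tᵇ, tᵃ)` vanishes, and both terms vanish when `a ≢ b (mod 2)`.
-/

section ShiftCocycle

variable {R : Type*} [Ring R] (P : ℕ → Prop) [DecidablePred P]
  {η : LaurentSeries R → LaurentSeries R → LaurentSeries R}
  (hη : ∀ (x y : LaurentSeries R) (n : ℤ), (η x y).coeff n =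
    ∑ᶠ k : ℕ, if P k then x.coeff (n - (k : ℤ)) * y.coeff (n + (k : ℤ)) else 0)
include hη

theorem shiftCocycle_neg_right (x y : LaurentSeries R) : η x (-y) = -η x y := by
  ext n
  rw [HahnSeries.coeff_neg, hη, hη, ← finsum_neg_distrib]
  congr 1 with k
  split_ifs <;> simp

theorem shiftCocycle_single_single (a b : ℤ) :
    η (HahnSeries.single a 1) (HahnSeries.single b 1) =
      if a ≤ b ∧ Even (b - a) ∧ P ((b - a) / 2).toNat then HahnSeries.single ((a + b) / 2) 1
      else 0 := by
  ext n
  rw [hη]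
  by_cases hn : a ≤ n ∧ a + b = 2 * n
  · obtain ⟨k, rfl⟩ : ∃ k : ℕ, n = a + k := ⟨(n - a).toNat, by omega⟩
    have hk : ((b - a) / 2).toNat = k := by omega
    have hab : a ≤ b ∧ Even (b - a) := ⟨by omega, k, by omega⟩
    have hmid : (a + b) / 2 = a + k := by omega
    rw [finsum_eq_single _ k fun j hj => by simp [HahnSeries.coeff_single]; omega]
    have hb : a + k + k = b := by omega
    simp only [hk, hab, hmid, true_and]
    split_ifs <;> simp [hb]
  · trans 0
    · exact finsum_eq_zero_of_forall_eq_zero fun k => by simp [HahnSeries.coeff_single]; omega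
    · split_ifs with h
      · rw [HahnSeries.coeff_single_of_ne]
        obtain ⟨hab, ⟨r, hr⟩, -⟩ := h
        omega
      · rfl

end ShiftCocycle

section TwistedProduct

variable {A : Type*} [AddCommGroup A] (η : A → A → A)

def twistedMul (g h : A × A) : A × A := (g.1 + h.1, g.2 + h.2 + η g.1 h.1)

def twistedInv (g : A × A) : A × A := (-g.1, -g.2 + η g.1 g.1)

def twistedCommutator (g h : A × A) : A × A :=
  twistedMul η (twistedMul η g h) (twistedInv η (twistedMul η h g))

theorem twistedCommutator_eq (hη : ∀ x y, η x (-y) = -η x y) (g h : A × A) :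
    twistedCommutator η g h = (0, η g.1 h.1 - η h.1 g.1) := by
  simp only [twistedCommutator, twistedMul, twistedInv, hη, add_comm h.1 g.1]
  ext <;> dsimp only <;> abel

end TwistedProduct

theorem stmt11_general (p : ℕ) (s : ℕ → ℕ) (hs : ∀ k, s k ≤ 1)
    (η : LaurentSeries (ZMod p) → LaurentSeries (ZMod p) → LaurentSeries (ZMod p))
    (hη : ∀ (x y : LaurentSeries (ZMod p)) (n : ℤ), (η x y).coeff n =
      ∑ᶠ k : ℕ, if 0 < k ∧ s k = 1 then
        x.coeff (n - (k : ℤ)) * y.coeff (n + (k : ℤ)) else 0) :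
    let A := LaurentSeries (ZMod p)
    let m : A × A → A × A → A × A :=
      fun g h => (g.1 + h.1, g.2 + h.2 + η g.1 h.1)
    let inv : A × A → A × A := fun g => (-g.1, -g.2 + η g.1 g.1)
    let comm : A × A → A × A → A × A := fun g h => m (m g h) (inv (m h g))
    (∀ g h : A × A, comm g h = (0, η g.1 h.1 - η h.1 g.1)) ∧
    (∀ a b : ℤ, a < b → (b - a) % 2 = 0 →
      comm (HahnSeries.single a (1 : ZMod p), 0) (HahnSeries.single b (1 : ZMod p), 0) =
        (0, HahnSeries.single ((a + b) / 2) ((s ((b - a) / 2).toNat : ℕ) : ZMod p))) ∧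
    (∀ a b : ℤ, (a = b ∨ (b - a) % 2 ≠ 0) →
      comm (HahnSeries.single a (1 : ZMod p), 0) (HahnSeries.single b (1 : ZMod p), 0) =
        (0, 0)) := by
  intro A m inv comm
  have hcomm : ∀ g h : A × A, comm g h = (0, η g.1 h.1 - η h.1 g.1) :=
    twistedCommutator_eq η (shiftCocycle_neg_right _ hη)
  refine ⟨hcomm, fun a b hab hmod => ?_, ?_⟩
  · have hk : 0 < ((b - a) / 2).toNat := by omega
    have heven : Even (b - a) := Int.even_iff.mpr hmod
    rw [hcomm, shiftCocycle_single_single _ hη, shiftCocycle_single_single _ hη]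
    rcases Nat.le_one_iff_eq_zero_or_eq_one.mp (hs ((b - a) / 2).toNat) with h | h <;>
      simp [hab.le, hab.not_ge, heven, hk, h]
  · rintro a b (rfl | hodd)
    · rw [hcomm, sub_self]
    · have hba : ¬Even (b - a) := by rw [Int.not_even_iff]; omega
      have hab : ¬Even (a - b) := by rwa [← even_neg, neg_sub]
      rw [hcomm, shiftCocycle_single_single _ hη, shiftCocycle_single_single _ hη]
      simp [hab, hba]

/-- In the central extension `G = A ×_{η_s} A` of `A = 𝔽_p((t))` by itself (with
multiplication `(x,a)(y,b) = (x+y, a+b+η_s(x,y))`) the commutator satisfies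
`[(x,a),(y,b)] = (0, η_s(x,y) − η_s(y,x))`; in particular
`[(tᵃ,0),(tᵇ,0)] = (0, s((b−a)/2) t^{(a+b)/2})` when `a < b` and `a ≡ b (mod 2)`, and is
trivial when `a = b` or `a ≢ b (mod 2)`. -/
theorem stmt11 (p : ℕ) [Fact p.Prime] (s : ℕ → ℕ) (hs : ∀ k, s k ≤ 1)
    (η : LaurentSeries (ZMod p) → LaurentSeries (ZMod p) → LaurentSeries (ZMod p))
    (hη : ∀ (x y : LaurentSeries (ZMod p)) (n : ℤ), (η x y).coeff n =
      ∑ᶠ k : ℕ, if 0 < k ∧ s k = 1 then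
        x.coeff (n - (k : ℤ)) * y.coeff (n + (k : ℤ)) else 0) :
    let A := LaurentSeries (ZMod p)
    let m : A × A → A × A → A × A :=
      fun g h => (g.1 + h.1, g.2 + h.2 + η g.1 h.1)
    let inv : A × A → A × A := fun g => (-g.1, -g.2 + η g.1 g.1)
    let comm : A × A → A × A → A × A := fun g h => m (m g h) (inv (m h g))
    (∀ g h : A × A, comm g h = (0, η g.1 h.1 - η h.1 g.1)) ∧
    (∀ a b : ℤ, a < b → (b - a) % 2 = 0 →
      comm (HahnSeries.single a (1 : ZMod p), 0) (HahnSeries.single b (1 : ZMod p), 0) =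
        (0, HahnSeries.single ((a + b) / 2) ((s ((b - a) / 2).toNat : ℕ) : ZMod p))) ∧
    (∀ a b : ℤ, (a = b ∨ (b - a) % 2 ≠ 0) →
      comm (HahnSeries.single a (1 : ZMod p), 0) (HahnSeries.single b (1 : ZMod p), 0) =
        (0, 0)) :=
  stmt11_general p s hs η hη
end
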